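/- Let 1 ≤ p < 2, 0 < a < b < ∞, and α, β ∈ ℝ. There exists a radially symmetric C² function u on the closed annulus {a ≤ |x| ≤ b} ⊂ ℝ² satisfying λ(A^u) ∈ ∂Γ_p in {a < |x| < b}, with u = α on |x| = a and u = β on |x| = b. -/

import Mathlib

/-- First eigenvalue of A^u for a radially symmetric function u(r). -/
noncomputable def lam1 (u : ℝ → ℝ) (r : ℝ) : ℝ :=
  (1 / (4 * Real.exp (u r))) * ((deriv u r) ^ 2 - 4 * deriv (deriv u) r)

/-- Second eigenvalue of A^u for a radially symmetric function u(r). -/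
noncomputable def lam2 (u : ℝ → ℝ) (r : ℝ) : ℝ :=
  -(1 / (4 * Real.exp (u r) * r)) * (deriv u r) * (4 + r * deriv u r)

def GammaP (p : ℝ) : Set (ℝ × ℝ) := {l | l.2 > (p - 2) * l.1 ∧ l.1 > (p - 2) * l.2}

/-!
For radial `u` the point `λ(A^u)` is put on one of the two rays of `∂Γ_p`,
`{(t, (p-2)t) : t ≥ 0}` or `{((p-2)t, t) : t ≥ 0}`, by solving the ODE explicitly.
If `α = β` take `u` constant (`λ = 0`). If `p = 1`, `u = c + B log r` has `λ₂ = -λ₁`, and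
`{λ₁ + λ₂ = 0}` is all of `∂Γ_1`. If `1 < p < 2`, `u = c - (4/m) log |K - r^m|` has
`u' = 4 r^(m-1) / (K - r^m)` and `λ = ((1-m) K s, -K s)` with `s > 0`; the exponent
`m = (1-p)/(2-p)` gives the first ray when `K ≥ 0`, and `m = p - 1` the second when `K ≤ 0`.
For each `m` the boundary values determine `K`, and its sign is that of
`d (d + 4 log (b/a))`, `d = β - α`, independently of `m`; this decides which exponent to use.
-/

open Real Set Filter Topology

lemma isOpen_gammaP (p : ℝ) : IsOpen (GammaP p) :=
  (isOpen_lt (by fun_prop) continuous_snd).inter (isOpen_lt (by fun_prop) continuous_fst)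

lemma mem_frontier_gammaP {p t : ℝ} (hp1 : 1 ≤ p) (hp3 : p < 3) (ht : 0 ≤ t) :
    (t, (p - 2) * t) ∈ frontier (GammaP p) := by
  rw [(isOpen_gammaP p).frontier_eq]
  refine ⟨?_, fun h => lt_irrefl _ h.1⟩
  have hlim : Tendsto (fun ε : ℝ => (t + ε, (p - 2) * t + ε)) (𝓝[>] 0) (𝓝 (t, (p - 2) * t)) :=
    (Continuous.tendsto' (by fun_prop) 0 _ (by simp)).mono_left nhdsWithin_le_nhds
  refine mem_closure_of_tendsto hlim ?_
  filter_upwards [self_mem_nhdsWithin] with ε (hε : 0 < ε)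
  have hslope : 0 ≤ (1 - (p - 2) ^ 2) * t := mul_nonneg (by nlinarith) ht
  constructor <;> dsimp only <;> nlinarith

lemma mem_frontier_gammaP' {p t : ℝ} (hp1 : 1 ≤ p) (hp3 : p < 3) (ht : 0 ≤ t) :
    ((p - 2) * t, t) ∈ frontier (GammaP p) := by
  have hswap : Homeomorph.prodComm ℝ ℝ ⁻¹' GammaP p = GammaP p := by
    ext; simp [GammaP, and_comm]
  rw [← hswap, ← Homeomorph.preimage_frontier]
  exact mem_frontier_gammaP hp1 hp3 ht

lemma mem_frontier_gammaP_one (x : ℝ) : (x, -x) ∈ frontier (GammaP 1) := by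
  rcases le_total 0 x with hx | hx
  · convert mem_frontier_gammaP le_rfl (by norm_num) hx using 2
    ring
  · convert mem_frontier_gammaP' le_rfl (by norm_num) (neg_nonneg.2 hx) using 2
    ring

lemma lam1_eq_of_hasDerivAt {u v : ℝ → ℝ} {r v' : ℝ} (hu : ∀ᶠ s in 𝓝 r, HasDerivAt u (v s) s)
    (hv : HasDerivAt v v' r) : lam1 u r = 1 / (4 * exp (u r)) * (v r ^ 2 - 4 * v') := by
  have hderiv : deriv u =ᶠ[𝓝 r] v := hu.mono fun s hs => hs.deriv
  rw [lam1, hu.self_of_nhds.deriv, hderiv.deriv_eq, hv.deriv]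

lemma lam2_eq_of_hasDerivAt {u : ℝ → ℝ} {r v : ℝ} (hu : HasDerivAt u v r) :
    lam2 u r = -(1 / (4 * exp (u r) * r)) * v * (4 + r * v) := by
  rw [lam2, hu.deriv]

lemma lam2_const_add_mul_log {r : ℝ} (hr : 0 < r) (c B : ℝ) :
    lam2 (fun r => c + B * log r) r = -lam1 (fun r => c + B * log r) r := by
  have hu : ∀ᶠ s in 𝓝 r, HasDerivAt (fun r => c + B * log r) (B * s⁻¹) s :=
    (eventually_gt_nhds hr).mono fun s hs => ((hasDerivAt_log hs.ne').const_mul B).const_add c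
  rw [lam1_eq_of_hasDerivAt hu ((hasDerivAt_inv hr.ne').const_mul B),
    lam2_eq_of_hasDerivAt hu.self_of_nhds]
  field_simp
  ring

lemma exists_frontier_solution_of_p_eq_one {a b : ℝ} (ha : 0 < a) (hab : a < b) (α β : ℝ) :
    ∃ u : ℝ → ℝ, ContDiffOn ℝ 2 u (Icc a b) ∧
      (∀ r ∈ Ioo a b, (lam1 u r, lam2 u r) ∈ frontier (GammaP 1)) ∧ u a = α ∧ u b = β := by
  have hlog : log b - log a ≠ 0 := (sub_pos.2 (log_lt_log ha hab)).ne'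
  set B := (β - α) / (log b - log a)
  refine ⟨fun r => (α - B * log a) + B * log r, fun r hr => ?_, fun r hr => ?_, by ring, ?_⟩
  · exact (contDiffAt_const.add (contDiffAt_const.mul
      (contDiffAt_log.2 (ha.trans_le hr.1).ne'))).contDiffWithinAt
  · rw [lam2_const_add_mul_log (ha.trans hr.1)]
    exact mem_frontier_gammaP_one _
  · linear_combination div_mul_cancel₀ (β - α) hlog

/-- `Real.log x = log |x|`, so this is `-(4/m) log |K - r^m|` on either side of a zero of
`K - r^m`. -/
noncomputable def powerProfile (m K r : ℝ) : ℝ := -(4 / m) * log (K - r ^ m)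

lemma hasDerivAt_powerProfile {m K r : ℝ} (hm : m ≠ 0) (hr : 0 < r) (hw : K - r ^ m ≠ 0) :
    HasDerivAt (powerProfile m K) (4 * r ^ m / (r * (K - r ^ m))) r := by
  refine ((((hasDerivAt_rpow_const (Or.inl hr.ne')).const_sub K).log hw).const_mul
    (-(4 / m))).congr_deriv ?_
  rw [rpow_sub_one hr.ne']
  field_simp

lemma contDiffAt_powerProfile {m K r : ℝ} (hr : 0 < r) (hw : K - r ^ m ≠ 0) :
    ContDiffAt ℝ 2 (powerProfile m K) r :=
  contDiffAt_const.mul ((contDiffAt_const.sub (contDiffAt_rpow_const_of_ne hr.ne')).log hw)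

lemma lam_powerProfile {m K r : ℝ} (hm : m ≠ 0) (hr : 0 < r) (hw : K - r ^ m ≠ 0) (c : ℝ) :
    ∃ s > 0, lam1 (fun r => c + powerProfile m K r) r = (1 - m) * (K * s) ∧
      lam2 (fun r => c + powerProfile m K r) r = -(K * s) := by
  have hnear : ∀ᶠ s in 𝓝 r, 0 < s ∧ K - s ^ m ≠ 0 := (eventually_gt_nhds hr).and
    ((continuousAt_const.sub (continuousAt_rpow_const r m (Or.inl hr.ne'))).eventually_ne hw)
  have hu : ∀ᶠ s in 𝓝 r, HasDerivAt (fun r => c + powerProfile m K r)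
      (4 * s ^ m / (s * (K - s ^ m))) s :=
    hnear.mono fun s hs => (hasDerivAt_powerProfile hm hs.1 hs.2).const_add c
  have hrpow := hasDerivAt_rpow_const (p := m) (Or.inl hr.ne')
  have hrw : r * (K - r ^ m) ≠ 0 := mul_ne_zero hr.ne' hw
  have hv := (hrpow.const_mul 4).div ((hasDerivAt_id' r).mul (hrpow.const_sub K)) hrw
  simp only [Pi.mul_apply] at hv
  refine ⟨4 * r ^ m / (exp (c + powerProfile m K r) * (r * (K - r ^ m)) ^ 2), by positivity,
    ?_, ?_⟩
  · rw [lam1_eq_of_hasDerivAt hu hv, rpow_sub_one hr.ne']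
    field_simp
    ring
  · rw [lam2_eq_of_hasDerivAt hu.self_of_nhds]
    field_simp
    ring

/-- Solves `K - a ^ m = exp (m * d / 4) * (K - b ^ m)`, the condition for
`powerProfile m K b - powerProfile m K a = d`. -/
noncomputable def powerCoeff (a b m d : ℝ) : ℝ :=
  a ^ m * ((exp (m * (d / 4 + log (b / a))) - 1) / (exp (m * d / 4) - 1))

lemma rpow_eq_rpow_mul_exp {a b : ℝ} (ha : 0 < a) (hb : 0 < b) (m : ℝ) :
    b ^ m = a ^ m * exp (m * log (b / a)) := by
  rw [rpow_def_of_pos hb, rpow_def_of_pos ha, ← exp_add, log_div hb.ne' ha.ne']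
  ring_nf

lemma exp_sub_one_ne_zero {x : ℝ} (hx : x ≠ 0) : exp x - 1 ≠ 0 := by
  rwa [sub_ne_zero, Ne, exp_eq_one_iff]

lemma powerCoeff_sub_rpow {a b m d : ℝ} (ha : 0 < a) (hb : 0 < b) (hm : m ≠ 0) (hd : d ≠ 0) :
    powerCoeff a b m d - a ^ m = exp (m * d / 4) * (powerCoeff a b m d - b ^ m) := by
  have hE := exp_sub_one_ne_zero (by positivity : m * d / 4 ≠ 0)
  rw [powerCoeff, rpow_eq_rpow_mul_exp ha hb m,
    show m * (d / 4 + log (b / a)) = m * d / 4 + m * log (b / a) by ring, exp_add]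
  field_simp
  ring

lemma powerCoeff_sub_rpow_ne_zero {a b m d : ℝ} (ha : 0 < a) (hab : a < b) (hm : m ≠ 0)
    (hd : d ≠ 0) : powerCoeff a b m d - a ^ m ≠ 0 := by
  have hE := exp_sub_one_ne_zero (by positivity : m * d / 4 ≠ 0)
  have hlog : 0 < log (b / a) := log_pos ((one_lt_div ha).2 hab)
  have hne : exp (m * (d / 4 + log (b / a))) - exp (m * d / 4) ≠ 0 :=
    sub_ne_zero.2 (exp_injective.ne (by intro h; apply hm; nlinarith))
  have hK : powerCoeff a b m d - a ^ m =
      a ^ m * (exp (m * (d / 4 + log (b / a))) - exp (m * d / 4)) / (exp (m * d / 4) - 1) := by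
    rw [powerCoeff]
    field_simp
    ring
  rw [hK]
  exact div_ne_zero (mul_ne_zero (rpow_pos_of_pos ha m).ne' hne) hE

lemma sub_rpow_ne_zero_of_mem_Icc {a b r m K E : ℝ} (ha : 0 < a) (hr : r ∈ Icc a b) (hE : 0 < E)
    (hKa : K - a ^ m ≠ 0) (hKab : K - a ^ m = E * (K - b ^ m)) : K - r ^ m ≠ 0 := by
  have hr0 : 0 < r := ha.trans_le hr.1
  have hbetween : (r ^ m - a ^ m) * (r ^ m - b ^ m) ≤ 0 := by
    rcases le_total 0 m with hm | hm
    · exact mul_nonpos_of_nonneg_of_nonpos (sub_nonneg.2 (rpow_le_rpow ha.le hr.1 hm))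
        (sub_nonpos.2 (rpow_le_rpow hr0.le hr.2 hm))
    · exact mul_nonpos_of_nonpos_of_nonneg (sub_nonpos.2 (rpow_le_rpow_of_nonpos ha hr.1 hm))
        (sub_nonneg.2 (rpow_le_rpow_of_nonpos hr0 hr.2 hm))
  have hKb : K - b ^ m ≠ 0 := fun h => hKa (by rw [hKab, h, mul_zero])
  have hsame : 0 < (K - a ^ m) * (K - b ^ m) := by
    rw [hKab, mul_assoc]
    exact mul_pos hE (mul_self_pos.2 hKb)
  intro hK
  rw [show r ^ m = K by linarith] at hbetween
  linarith

lemma powerProfile_sub {a b m K d : ℝ} (hm : m ≠ 0) (hKb : K - b ^ m ≠ 0)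
    (hKab : K - a ^ m = exp (m * d / 4) * (K - b ^ m)) :
    powerProfile m K b - powerProfile m K a = d := by
  rw [powerProfile, powerProfile, hKab, log_mul (exp_ne_zero _) hKb, log_exp]
  field_simp
  ring

lemma exp_sub_one_div_exp_sub_one_nonneg {x y : ℝ} (h : 0 ≤ x * y) :
    0 ≤ (exp x - 1) / (exp y - 1) := by
  rcases mul_nonneg_iff.1 h with ⟨hx, hy⟩ | ⟨hx, hy⟩
  · exact div_nonneg (sub_nonneg.2 (one_le_exp hx)) (sub_nonneg.2 (one_le_exp hy))
  · exact div_nonneg_of_nonpos (sub_nonpos.2 (exp_le_one_iff.2 hx))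
      (sub_nonpos.2 (exp_le_one_iff.2 hy))

lemma exp_sub_one_div_exp_sub_one_nonpos {x y : ℝ} (h : x * y ≤ 0) :
    (exp x - 1) / (exp y - 1) ≤ 0 := by
  rcases mul_nonpos_iff.1 h with ⟨hx, hy⟩ | ⟨hx, hy⟩
  · exact div_nonpos_of_nonneg_of_nonpos (sub_nonneg.2 (one_le_exp hx))
      (sub_nonpos.2 (exp_le_one_iff.2 hy))
  · exact div_nonpos_of_nonpos_of_nonneg (sub_nonpos.2 (exp_le_one_iff.2 hx))
      (sub_nonneg.2 (one_le_exp hy))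

lemma powerCoeff_nonneg {a b m d : ℝ} (ha : 0 ≤ a) (h : 0 ≤ d * (d + 4 * log (b / a))) :
    0 ≤ powerCoeff a b m d :=
  mul_nonneg (rpow_nonneg ha m)
    (exp_sub_one_div_exp_sub_one_nonneg (by nlinarith [mul_nonneg (sq_nonneg m) h]))

lemma powerCoeff_nonpos {a b m d : ℝ} (ha : 0 ≤ a) (h : d * (d + 4 * log (b / a)) ≤ 0) :
    powerCoeff a b m d ≤ 0 :=
  mul_nonpos_of_nonneg_of_nonpos (rpow_nonneg ha m) (exp_sub_one_div_exp_sub_one_nonpos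
    (by nlinarith [mul_nonpos_of_nonneg_of_nonpos (sq_nonneg m) h]))

lemma exists_powerProfile_bvp {a b m α β : ℝ} (hm : m ≠ 0) (ha : 0 < a) (hab : a < b)
    (hαβ : α ≠ β) :
    ∃ u : ℝ → ℝ, ContDiffOn ℝ 2 u (Icc a b) ∧ u a = α ∧ u b = β ∧
      ∀ r ∈ Ioo a b, ∃ s > 0, lam1 u r = (1 - m) * (powerCoeff a b m (β - α) * s) ∧
        lam2 u r = -(powerCoeff a b m (β - α) * s) := by
  set K := powerCoeff a b m (β - α)
  have hd : β - α ≠ 0 := sub_ne_zero.2 hαβ.symm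
  have hKab := powerCoeff_sub_rpow ha (ha.trans hab) hm hd
  have hw : ∀ r ∈ Icc a b, K - r ^ m ≠ 0 := fun r hr =>
    sub_rpow_ne_zero_of_mem_Icc ha hr (exp_pos _) (powerCoeff_sub_rpow_ne_zero ha hab hm hd) hKab
  have hpos : ∀ r ∈ Icc a b, 0 < r := fun r hr => ha.trans_le hr.1
  refine ⟨fun r => (α - powerProfile m K a) + powerProfile m K r, fun r hr => ?_, by ring, ?_,
    fun r hr => lam_powerProfile hm (hpos r (Ioo_subset_Icc_self hr))
      (hw r (Ioo_subset_Icc_self hr)) _⟩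
  · exact (contDiffAt_const.add (contDiffAt_powerProfile (hpos r hr) (hw r hr))).contDiffWithinAt
  · linarith [powerProfile_sub hm (hw b ⟨hab.le, le_rfl⟩) hKab]

lemma exists_frontier_solution_of_one_lt {p a b α β : ℝ} (hp1 : 1 < p) (hp2 : p < 2) (ha : 0 < a)
    (hab : a < b) (hαβ : α ≠ β) :
    ∃ u : ℝ → ℝ, ContDiffOn ℝ 2 u (Icc a b) ∧
      (∀ r ∈ Ioo a b, (lam1 u r, lam2 u r) ∈ frontier (GammaP p)) ∧ u a = α ∧ u b = β := by
  have h2p : 2 - p ≠ 0 := by linarith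
  rcases le_total 0 ((β - α) * (β - α + 4 * log (b / a))) with h | h
  · obtain ⟨u, hu, hua, hub, hlam⟩ := exists_powerProfile_bvp (m := (1 - p) / (2 - p))
      (div_ne_zero (by linarith) h2p) ha hab hαβ
    refine ⟨u, hu, fun r hr => ?_, hua, hub⟩
    obtain ⟨s, hs, h1, h2⟩ := hlam r hr
    have hk := mul_nonneg (powerCoeff_nonneg (m := (1 - p) / (2 - p)) ha.le h) hs.le
    rw [h1, h2]
    generalize powerCoeff a b ((1 - p) / (2 - p)) (β - α) * s = k at hk
    convert mem_frontier_gammaP hp1.le (by linarith) (div_nonneg hk (by linarith : 0 ≤ 2 - p))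
      using 2 <;> field_simp <;> ring
  · obtain ⟨u, hu, hua, hub, hlam⟩ := exists_powerProfile_bvp (m := p - 1)
      (by linarith) ha hab hαβ
    refine ⟨u, hu, fun r hr => ?_, hua, hub⟩
    obtain ⟨s, hs, h1, h2⟩ := hlam r hr
    have hk := mul_nonpos_of_nonpos_of_nonneg (powerCoeff_nonpos (m := p - 1) ha.le h) hs.le
    rw [h1, h2]
    convert mem_frontier_gammaP' hp1.le (by linarith) (neg_nonneg.2 hk) using 2
    ring

theorem stmt10 (p a b α β : ℝ) (hp1 : 1 ≤ p) (hp2 : p < 2) (ha : 0 < a) (hab : a < b) :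
    ∃ u : ℝ → ℝ, ContDiffOn ℝ 2 u (Set.Icc a b) ∧
      (∀ r ∈ Set.Ioo a b, (lam1 u r, lam2 u r) ∈ frontier (GammaP p)) ∧
      u a = α ∧ u b = β := by
  rcases eq_or_ne α β with rfl | hαβ
  · refine ⟨fun _ => α, contDiffOn_const, fun r _ => ?_, rfl, rfl⟩
    simpa [lam1, lam2] using mem_frontier_gammaP hp1 (by linarith) le_rfl
  rcases hp1.eq_or_lt with rfl | hp1
  · exact exists_frontier_solution_of_p_eq_one ha hab α β
  · exact exists_frontier_solution_of_one_lt hp1 hp2 ha hab hαβ
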